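/- Let G be a finite simple graph. Then μ(G) ≤ 1 if and only if every two maximal matchings of G that each have an augmenting P4 have the same size. -/

import Mathlib

open SimpleGraph

variable {V : Type*}

/-- `M` is a matching in `G`: a set of pairwise vertex-disjoint edges of `G`. -/
def IsMatchingIn (G : SimpleGraph V) (M : Finset (Sym2 V)) : Prop :=
  (∀ e ∈ M, e ∈ G.edgeSet) ∧
    ∀ e ∈ M, ∀ f ∈ M, e ≠ f → ∀ v : V, v ∈ e → v ∉ f

/-- `M` is a maximal matching in `G`: a matching not properly contained in another matching. -/
def IsMaximalMatchingIn (G : SimpleGraph V) (M : Finset (Sym2 V)) : Prop :=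
  IsMatchingIn G M ∧ ∀ M', IsMatchingIn G M' → M ⊆ M' → M' = M

/-- `M` saturates (covers) the vertex `v`. -/
def Sat (M : Finset (Sym2 V)) (v : V) : Prop := ∃ e ∈ M, v ∈ e

/-- The matching number `ν(G)`. -/
noncomputable def nuNum (G : SimpleGraph V) : ℕ :=
  sSup {n | ∃ M, IsMatchingIn G M ∧ M.card = n}

/-- The minimum maximal matching number `β(G)`. -/
noncomputable def betaNum (G : SimpleGraph V) : ℕ :=
  sInf {n | ∃ M, IsMaximalMatchingIn G M ∧ M.card = n}

/-- The matching gap `μ(G) = ν(G) - β(G)`. -/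
noncomputable def muGap (G : SimpleGraph V) : ℕ := nuNum G - betaNum G

/-- `M` has an augmenting `P₄`: a path `u w y v` on four distinct vertices with
`wy ∈ M` and `u`, `v` not saturated by `M`. -/
def HasAugP4 (G : SimpleGraph V) (M : Finset (Sym2 V)) : Prop :=
  ∃ u w y v : V, u ≠ w ∧ u ≠ y ∧ u ≠ v ∧ w ≠ y ∧ w ≠ v ∧ y ≠ v ∧
    G.Adj u w ∧ G.Adj w y ∧ G.Adj y v ∧ s(w, y) ∈ M ∧ ¬ Sat M u ∧ ¬ Sat M v



/-!
If a maximal matching `M` has an augmenting `P₄`, exchanging its middle edge for the two outer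
ones gives a maximal matching with one more edge, so `β ≤ |M| < ν`; when `μ ≤ 1` this forces
`|M| = ν - 1`.

Conversely, a maximal matching `M` with `|M| < ν` can be turned into a maximal matching of the
same size with an augmenting `P₄`. Take a vertex `u` covered by a maximum matching `N` but not by
`M`, its `N`-partner `w`, and the `M`-partner `y` of `w`. Either `y` has an uncovered neighbour
`v ≠ u`, and `u w y v` is the path, or replacing `wy` by `uw` keeps `M` maximal and brings it
closer to `N`. If `μ ≥ 2`, applying this to a minimum maximal matching and to its augmentation
yields maximal matchings with augmenting `P₄`s of sizes `β` and `β + 1`.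
-/

open Finset

section Matching

variable {G : SimpleGraph V} {M N : Finset (Sym2 V)} {e f : Sym2 V} {a b z : V}

lemma sat_of_mem (he : e ∈ M) (hz : z ∈ e) : Sat M z := ⟨e, he, hz⟩

lemma not_mem_of_not_sat (ha : ¬ Sat M a) : s(a, b) ∉ M :=
  fun h => ha (sat_of_mem h (Sym2.mem_mk_left a b))

lemma sat_insert_iff [DecidableEq V] : Sat (insert e M) z ↔ z ∈ e ∨ Sat M z := by
  simp [Sat]

lemma IsMatchingIn.eq_of_mem (hM : IsMatchingIn G M) (he : e ∈ M) (hf : f ∈ M)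
    (hze : z ∈ e) (hzf : z ∈ f) : e = f :=
  by_contra fun h => hM.2 e he f hf h z hze hzf

lemma IsMatchingIn.sat_erase_iff [DecidableEq V] (hM : IsMatchingIn G M) (he : e ∈ M) :
    Sat (M.erase e) z ↔ Sat M z ∧ z ∉ e := by
  constructor
  · rintro ⟨f, hf, hzf⟩
    obtain ⟨hfe, hf⟩ := mem_erase.mp hf
    exact ⟨sat_of_mem hf hzf, fun hze => hfe (hM.eq_of_mem hf he hzf hze)⟩
  · rintro ⟨⟨f, hf, hzf⟩, hze⟩
    exact ⟨f, mem_erase.mpr ⟨by rintro rfl; exact hze hzf, hf⟩, hzf⟩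

lemma IsMatchingIn.subset (hM : IsMatchingIn G M) (h : N ⊆ M) : IsMatchingIn G N :=
  ⟨fun e he => hM.1 e (h he), fun e he f hf => hM.2 e (h he) f (h hf)⟩

lemma IsMatchingIn.insert [DecidableEq V] (hM : IsMatchingIn G M) (hab : G.Adj a b)
    (ha : ¬ Sat M a) (hb : ¬ Sat M b) : IsMatchingIn G (insert s(a, b) M) := by
  have disjoint : ∀ f ∈ M, ∀ z ∈ s(a, b), z ∉ f := by
    intro f hf z hz hzf
    rcases Sym2.mem_iff.mp hz with rfl | rfl
    exacts [ha (sat_of_mem hf hzf), hb (sat_of_mem hf hzf)]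
  refine ⟨fun e he => ?_, fun e he f hf hef z hze hzf => ?_⟩
  · rcases mem_insert.mp he with rfl | he
    exacts [hab, hM.1 e he]
  · rcases mem_insert.mp he with rfl | he <;> rcases mem_insert.mp hf with rfl | hf
    · exact hef rfl
    · exact disjoint f hf z hze hzf
    · exact disjoint e he z hzf hze
    · exact hM.2 e he f hf hef z hze hzf

lemma isMaximalMatchingIn_iff :
    IsMaximalMatchingIn G M ↔
      IsMatchingIn G M ∧ ∀ a b, G.Adj a b → Sat M a ∨ Sat M b := by
  classical
  constructor
  · refine fun ⟨hM, hmax⟩ => ⟨hM, fun a b hab => ?_⟩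
    by_contra! h
    have := hmax _ (hM.insert hab h.1 h.2) (subset_insert _ _)
    exact not_mem_of_not_sat h.1 (this ▸ mem_insert_self _ _)
  · refine fun ⟨hM, hsat⟩ => ⟨hM, fun M' hM' hsub => ?_⟩
    by_contra hne
    obtain ⟨e, heM', heM⟩ := exists_of_ssubset (hsub.ssubset_of_ne (Ne.symm hne))
    induction e using Sym2.ind with
    | _ a b =>
      have clash : ∀ z ∈ s(a, b), ¬ Sat M z := fun z hz ⟨f, hf, hzf⟩ =>
        hM'.2 _ heM' f (hsub hf) (fun h => heM (h ▸ hf)) z hz hzf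
      rcases hsat a b (hM'.1 _ heM') with h | h
      exacts [clash a (Sym2.mem_mk_left a b) h, clash b (Sym2.mem_mk_right a b) h]

lemma IsMaximalMatchingIn.of_sat_subset (hM : IsMaximalMatchingIn G M) (hN : IsMatchingIn G N)
    (h : ∀ z, Sat M z → Sat N z) : IsMaximalMatchingIn G N :=
  isMaximalMatchingIn_iff.mpr ⟨hN, fun a b hab =>
    ((isMaximalMatchingIn_iff.mp hM).2 a b hab).imp (h a) (h b)⟩

lemma IsMatchingIn.card_biUnion_toFinset [DecidableEq V] (hM : IsMatchingIn G M) :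
    (M.biUnion Sym2.toFinset).card = 2 * M.card := by
  rw [card_biUnion fun e he f hf hef => disjoint_left.mpr fun z hze hzf =>
    hM.2 e he f hf hef z (Sym2.mem_toFinset.mp hze) (Sym2.mem_toFinset.mp hzf)]
  rw [sum_congr rfl fun e he => Sym2.card_toFinset_of_not_isDiag e
    (G.not_isDiag_of_mem_edgeSet (hM.1 e he)), sum_const, smul_eq_mul, mul_comm]

lemma IsMatchingIn.exists_sat_not_sat (hM : IsMatchingIn G M) (hN : IsMatchingIn G N)
    (h : M.card < N.card) : ∃ u, Sat N u ∧ ¬ Sat M u := by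
  classical
  by_contra! hsub
  have : N.biUnion Sym2.toFinset ⊆ M.biUnion Sym2.toFinset := fun z hz => by
    obtain ⟨f, hf, hzf⟩ := mem_biUnion.mp hz
    obtain ⟨e, he, hze⟩ := hsub z (sat_of_mem hf (Sym2.mem_toFinset.mp hzf))
    exact mem_biUnion.mpr ⟨e, he, Sym2.mem_toFinset.mpr hze⟩
  have := card_le_card this
  rw [hN.card_biUnion_toFinset, hM.card_biUnion_toFinset] at this
  omega

end Matching

section Augmentation

variable {G : SimpleGraph V} {M N : Finset (Sym2 V)}

lemma IsMaximalMatchingIn.exists_card_succ_of_hasAugP4 (hM : IsMaximalMatchingIn G M)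
    (hA : HasAugP4 G M) : ∃ M', IsMaximalMatchingIn G M' ∧ M'.card = M.card + 1 := by
  classical
  obtain ⟨u, w, y, v, -, huy, huv, hwy, hwv, -, huw, -, hyv, hwyM, hu, hv⟩ := hA
  set M₀ := M.erase s(w, y)
  have hM₀ : IsMatchingIn G M₀ := hM.1.subset (erase_subset _ _)
  have sat₀ : ∀ z, Sat M₀ z ↔ Sat M z ∧ z ∉ s(w, y) := fun z => hM.1.sat_erase_iff hwyM
  have hy₀ : ¬ Sat M₀ y := fun h => ((sat₀ y).mp h).2 (Sym2.mem_mk_right w y)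
  have hv₀ : ¬ Sat M₀ v := fun h => hv ((sat₀ v).mp h).1
  set M₁ := insert s(y, v) M₀
  have hu₁ : ¬ Sat M₁ u := by
    rw [sat_insert_iff, Sym2.mem_iff, sat₀]
    simp [huy, huv, hu]
  have hw₁ : ¬ Sat M₁ w := by
    rw [sat_insert_iff, Sym2.mem_iff, sat₀]
    simp [hwv, hwy]
  have hM₂ := (hM₀.insert hyv hy₀ hv₀).insert huw hu₁ hw₁
  refine ⟨insert s(u, w) M₁, hM.of_sat_subset hM₂ ?_, ?_⟩
  · intro z hz
    rw [sat_insert_iff, sat_insert_iff, sat₀]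
    by_cases hzwy : z ∈ s(w, y)
    · rcases Sym2.mem_iff.mp hzwy with rfl | rfl <;> simp
    · exact Or.inr (Or.inr ⟨hz, hzwy⟩)
  · rw [card_insert_of_notMem (not_mem_of_not_sat hu₁), card_insert_of_notMem
      (not_mem_of_not_sat hy₀), card_erase_add_one hwyM]

lemma IsMaximalMatchingIn.insert_erase [DecidableEq V] {u w y : V}
    (hM : IsMaximalMatchingIn G M) (huw : G.Adj u w) (hwy : s(w, y) ∈ M) (hu : ¬ Sat M u)
    (hy : ∀ v, G.Adj y v → ¬ Sat M v → v = u) :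
    IsMaximalMatchingIn G (insert s(u, w) (M.erase s(w, y))) := by
  have sat₀ : ∀ z, Sat (M.erase s(w, y)) z ↔ Sat M z ∧ z ∉ s(w, y) :=
    fun z => hM.1.sat_erase_iff hwy
  have hu₀ : ¬ Sat (M.erase s(w, y)) u := fun h => hu ((sat₀ u).mp h).1
  have hw₀ : ¬ Sat (M.erase s(w, y)) w := fun h => ((sat₀ w).mp h).2 (Sym2.mem_mk_left w y)
  have hM₁ := (hM.1.subset (erase_subset _ _)).insert huw hu₀ hw₀
  set M₁ := insert s(u, w) (M.erase s(w, y))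
  -- only `y` loses its partner, and every uncovered neighbour of `y` is `u`
  have sat₁ : ∀ z, Sat M z → z ≠ y → Sat M₁ z := by
    intro z hz hzy
    rw [sat_insert_iff, sat₀, Sym2.mem_iff, Sym2.mem_iff]
    tauto
  have edge : ∀ c d, G.Adj c d → Sat M c → Sat M₁ c ∨ Sat M₁ d := by
    intro c d hcd hc
    by_cases hcy : c = y
    · subst hcy
      by_cases hd : Sat M d
      · exact Or.inr (sat₁ d hd hcd.ne')
      · exact Or.inr (sat_insert_iff.mpr (Or.inl (hy d hcd hd ▸ Sym2.mem_mk_left _ _)))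
    · exact Or.inl (sat₁ c hc hcy)
  refine isMaximalMatchingIn_iff.mpr ⟨hM₁, fun a b hab => ?_⟩
  rcases (isMaximalMatchingIn_iff.mp hM).2 a b hab with h | h
  exacts [edge a b hab h, (edge b a hab.symm h).symm]

lemma IsMaximalMatchingIn.hasAugP4_or_exists_closer [DecidableEq V]
    (hM : IsMaximalMatchingIn G M) (hN : IsMatchingIn G N) (h : M.card < N.card) :
    HasAugP4 G M ∨ ∃ M', IsMaximalMatchingIn G M' ∧ M'.card = M.card ∧
      (M' \ N).card < (M \ N).card := by
  obtain ⟨u, ⟨e, heN, hue⟩, hu⟩ := hM.1.exists_sat_not_sat hN h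
  obtain ⟨w, rfl⟩ : ∃ w, s(u, w) = e := ⟨_, Sym2.other_spec hue⟩
  have huw : G.Adj u w := hN.1 _ heN
  obtain ⟨f, hf, hwf⟩ := ((isMaximalMatchingIn_iff.mp hM).2 u w huw).resolve_left hu
  obtain ⟨y, rfl⟩ : ∃ y, s(w, y) = f := ⟨_, Sym2.other_spec hwf⟩
  have hwy : G.Adj w y := hM.1.1 _ hf
  have hyu : y ≠ u := fun h => hu (sat_of_mem hf (h ▸ Sym2.mem_mk_right w y))
  by_cases hP4 : ∃ v, G.Adj y v ∧ ¬ Sat M v ∧ v ≠ u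
  · obtain ⟨v, hyv, hv, hvu⟩ := hP4
    have hwv : w ≠ v := fun h => hv (sat_of_mem hf (h ▸ Sym2.mem_mk_left w y))
    exact Or.inl ⟨u, w, y, v, huw.ne, hyu.symm, hvu.symm, hwy.ne, hwv, hyv.ne, huw, hwy, hyv,
      hf, hu, hv⟩
  have hy : ∀ v, G.Adj y v → ¬ Sat M v → v = u :=
    fun v hyv hv => by_contra fun hvu => hP4 ⟨v, hyv, hv, hvu⟩
  refine Or.inr ⟨_, hM.insert_erase huw hf hu hy, ?_, ?_⟩
  · rw [card_insert_of_notMem (not_mem_of_not_sat fun h => hu ((hM.1.sat_erase_iff hf).mp h).1),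
      card_erase_add_one hf]
  · have hwyN : s(w, y) ∉ N := fun hwyN => by
      have := hN.eq_of_mem heN hwyN (Sym2.mem_mk_right u w) (Sym2.mem_mk_left w y)
      rcases Sym2.mem_iff.mp (this ▸ Sym2.mem_mk_left u w) with h | h
      exacts [huw.ne h, hyu h.symm]
    rw [insert_sdiff_of_mem _ heN, erase_sdiff_comm]
    exact card_erase_lt_of_mem (mem_sdiff.mpr ⟨hf, hwyN⟩)

lemma IsMaximalMatchingIn.exists_hasAugP4_of_card_lt [DecidableEq V]
    (hM : IsMaximalMatchingIn G M) (hN : IsMatchingIn G N) (h : M.card < N.card) :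
    ∃ M', IsMaximalMatchingIn G M' ∧ M'.card = M.card ∧ HasAugP4 G M' := by
  induction hk : (M \ N).card using Nat.strong_induction_on generalizing M with
  | _ k ih =>
    rcases hM.hasAugP4_or_exists_closer hN h with hA | ⟨M', hM', hcard, hlt⟩
    · exact ⟨M, hM, rfl, hA⟩
    · obtain ⟨M'', hM'', hcard', hA⟩ := ih _ (hk ▸ hlt) hM' (hcard ▸ h) rfl
      exact ⟨M'', hM'', hcard'.trans hcard, hA⟩

end Augmentation

section MatchingNumbers

variable {G : SimpleGraph V} {M : Finset (Sym2 V)}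

lemma IsMaximalMatchingIn.betaNum_le (hM : IsMaximalMatchingIn G M) : betaNum G ≤ M.card :=
  Nat.sInf_le ⟨M, hM, rfl⟩

variable [Fintype V]

lemma bddAbove_matchingCards : BddAbove {n | ∃ M, IsMatchingIn G M ∧ M.card = n} := by
  classical
  exact ⟨Fintype.card (Sym2 V), by rintro n ⟨M, -, rfl⟩; exact card_le_univ M⟩

lemma IsMatchingIn.card_le_nuNum (hM : IsMatchingIn G M) : M.card ≤ nuNum G :=
  le_csSup bddAbove_matchingCards ⟨M, hM, rfl⟩

lemma exists_isMatchingIn_card_eq_nuNum (G : SimpleGraph V) :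
    ∃ N, IsMatchingIn G N ∧ N.card = nuNum G := by
  have hempty : IsMatchingIn G ∅ := ⟨by simp, by simp⟩
  exact Nat.sSup_mem (s := {n | ∃ M, IsMatchingIn G M ∧ M.card = n}) ⟨0, ∅, hempty, rfl⟩
    bddAbove_matchingCards

lemma IsMatchingIn.isMaximalMatchingIn_of_card_eq_nuNum (hM : IsMatchingIn G M)
    (hcard : M.card = nuNum G) : IsMaximalMatchingIn G M :=
  ⟨hM, fun _ hM' hsub => (eq_of_subset_of_card_le hsub (hcard ▸ hM'.card_le_nuNum)).symm⟩

lemma exists_isMaximalMatchingIn_card_eq_betaNum (G : SimpleGraph V) :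
    ∃ B, IsMaximalMatchingIn G B ∧ B.card = betaNum G := by
  obtain ⟨N, hN, hcard⟩ := exists_isMatchingIn_card_eq_nuNum G
  exact Nat.sInf_mem (s := {n | ∃ M, IsMaximalMatchingIn G M ∧ M.card = n})
    ⟨_, N, hN.isMaximalMatchingIn_of_card_eq_nuNum hcard, rfl⟩

lemma IsMaximalMatchingIn.card_add_one_eq_nuNum (hM : IsMaximalMatchingIn G M)
    (hA : HasAugP4 G M) (hμ : muGap G ≤ 1) : M.card + 1 = nuNum G := by
  obtain ⟨M', hM', hcard⟩ := hM.exists_card_succ_of_hasAugP4 hA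
  have := hM'.1.card_le_nuNum
  have := hM.betaNum_le
  rw [muGap] at hμ
  omega

end MatchingNumbers

theorem stmt_5 {V : Type*} [Fintype V] (G : SimpleGraph V) :
    muGap G ≤ 1 ↔
      ∀ M M' : Finset (Sym2 V), IsMaximalMatchingIn G M → IsMaximalMatchingIn G M' →
        HasAugP4 G M → HasAugP4 G M' → M.card = M'.card := by
  classical
  constructor
  · intro hμ M M' hM hM' hA hA'
    have := hM.card_add_one_eq_nuNum hA hμ
    have := hM'.card_add_one_eq_nuNum hA' hμ
    omega
  · intro hsame
    by_contra! hμ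
    rw [muGap] at hμ
    obtain ⟨N, hN, hNcard⟩ := exists_isMatchingIn_card_eq_nuNum G
    obtain ⟨B, hB, hBcard⟩ := exists_isMaximalMatchingIn_card_eq_betaNum G
    obtain ⟨M₁, hM₁, hM₁card, hA₁⟩ := hB.exists_hasAugP4_of_card_lt hN (by omega)
    obtain ⟨M₂, hM₂, hM₂card⟩ := hM₁.exists_card_succ_of_hasAugP4 hA₁
    obtain ⟨M₃, hM₃, hM₃card, hA₃⟩ := hM₂.exists_hasAugP4_of_card_lt hN (by omega)
    have := hsame M₁ M₃ hM₁ hM₃ hA₁ hA₃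
    omega
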